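/- arXiv:math/0005022 — 2 statements merged into one kernel-verified Lean document; each statement's English description precedes it below -/
import Mathlib

section
/- Let μ be an element of M (a minimal nonzero dominant element of X∨) and suppose there exists a root γ ∈ R with ⟨γ, μ⟩ ≥ 2. Then μ = γ∨, and γ is the unique root of R with ⟨γ, μ⟩ ≥ 2. -/
open scoped BigOperators Classical

noncomputable section

/-- Data of a finite crystallographic root system in a pair of vector spaces `V`, `V'`
(in perfect duality via `pair`), with a chosen base `Δ` and a cocharacter lattice `X`. -/
structure RootSystemData (V V' : Type) [AddCommGroup V] [Module ℝ V]
    [FiniteDimensional ℝ V] [AddCommGroup V'] [Module ℝ V'] [FiniteDimensional ℝ V'] where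
  /-- The canonical pairing between `V` and `V'`. -/
  pair : V →ₗ[ℝ] V' →ₗ[ℝ] ℝ
  /-- The (finite) set of roots. -/
  R : Finset V
  /-- The coroot attached to a root. -/
  coroot : V → V'
  root_ne_zero : ∀ α ∈ R, α ≠ (0 : V)
  neg_mem : ∀ α ∈ R, -α ∈ R
  coroot_neg : ∀ α ∈ R, coroot (-α) = -coroot α
  pair_self_eq_two : ∀ α ∈ R, pair α (coroot α) = 2
  crystallographic : ∀ α ∈ R, ∀ β ∈ R, ∃ n : ℤ, pair α (coroot β) = (n : ℝ)
  reflect_root_mem : ∀ α ∈ R, ∀ β ∈ R, β - pair β (coroot α) • α ∈ R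
  reflect_coroot_mem : ∀ α ∈ R, ∀ β ∈ R,
    coroot β - pair α (coroot β) • coroot α ∈ coroot '' R
  /-- The chosen base (set of simple roots). -/
  Δ : Finset V
  base_subset : Δ ⊆ R
  base_indep : LinearIndependent ℝ (fun a : (Δ : Set V) => (a : V))
  base_generates : ∀ α ∈ R,
    α ∈ AddSubmonoid.closure (Δ : Set V) ∨ -α ∈ AddSubmonoid.closure (Δ : Set V)
  /-- The lattice `X∨`. -/
  X : AddSubgroup V'
  coroot_mem_X : ∀ α ∈ R, coroot α ∈ X
  X_le_span : (X : Set V') ⊆ (Submodule.span ℝ (coroot '' (R : Set V)) : Set V')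
  pair_X_int : ∀ α ∈ R, ∀ x ∈ X, ∃ n : ℤ, pair α x = (n : ℝ)

namespace RootSystemData

variable {V V' : Type} [AddCommGroup V] [Module ℝ V] [FiniteDimensional ℝ V]
  [AddCommGroup V'] [Module ℝ V'] [FiniteDimensional ℝ V']
  (D : RootSystemData V V')

/-- The set `R₊` of positive roots: roots which are `ℕ`-linear combinations of the base. -/
def Rpos : Finset V := D.R.filter fun α => α ∈ AddSubmonoid.closure (D.Δ : Set V)

/-- The coroot lattice `Q∨`. -/
def Qc : AddSubgroup V' := AddSubgroup.closure (D.coroot '' (D.R : Set V))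

/-- The positive cone `Q∨₊` generated by the coroots of the positive roots. -/
def Qpos : AddSubmonoid V' := AddSubmonoid.closure (D.coroot '' (D.Rpos : Set V))

/-- The dominance order: `ν ≤ λ` iff `λ - ν ∈ Q∨₊`. -/
def leQ (ν lam : V') : Prop := lam - ν ∈ D.Qpos

/-- Dominance: `ν` is dominant iff `⟨α, ν⟩ ≥ 0` for every positive root `α`. -/
def Dominant (ν : V') : Prop := ∀ α ∈ D.Rpos, 0 ≤ D.pair α ν

/-- The set `X∨₊` of dominant elements of the lattice. -/
def Xplus : Set V' := {x | x ∈ D.X ∧ D.Dominant x}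

/-- The set `M` of minimal elements of `X∨₊ \ {0}` for the dominance order. -/
def MSet : Set V' :=
  {μ | μ ∈ D.Xplus ∧ μ ≠ 0 ∧ ∀ ν ∈ D.Xplus, ν ≠ 0 → D.leQ ν μ → ν = μ}

/-- The reflection on `V` attached to a root `α`. -/
def reflV (α : V) (hα : α ∈ D.R) : V ≃ₗ[ℝ] V :=
  Module.reflection (show D.pair.flip (D.coroot α) α = 2 from D.pair_self_eq_two α hα)

/-- The reflection on `V'` attached to a root `α`. -/
def reflV' (α : V) (hα : α ∈ D.R) : V' ≃ₗ[ℝ] V' :=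
  Module.reflection (show D.pair α (D.coroot α) = 2 from D.pair_self_eq_two α hα)

/-- The Weyl group `W`, acting simultaneously on `V` (first component)
and on `V'` (second component); it is generated by the pairs of reflections
attached to the roots. -/
def weyl : Subgroup ((V ≃ₗ[ℝ] V) × (V' ≃ₗ[ℝ] V')) :=
  Subgroup.closure {g | ∃ α, ∃ hα : α ∈ D.R, g = (D.reflV α hα, D.reflV' α hα)}

/-- The orbit `Wμ` of `μ ∈ V'` under the Weyl group. -/
def Worbit (μ : V') : Set V' := {ν | ∃ g ∈ D.weyl, ν = g.2 μ}

/-- The set `Ω(λ) = {ν ∈ X∨ : wν ≤ λ for all w ∈ W}`. -/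
def Omega (lam : V') : Set V' :=
  {ν | ν ∈ D.X ∧ ∀ g ∈ D.weyl, D.leQ (g.2 ν) lam}

/-- Two roots are linked when they are non-orthogonal. -/
def Linked (α β : V) : Prop := α ∈ D.R ∧ β ∈ D.R ∧ D.pair α (D.coroot β) ≠ 0

/-- Two roots lie in the same irreducible component iff they are connected by a
chain of non-orthogonal roots. -/
def SameComponent (α β : V) : Prop := Relation.EqvGen D.Linked α β

/-- The half-sum `ρ` of the positive roots. -/
def rho : V := (2 : ℝ)⁻¹ • ∑ α ∈ D.Rpos, α

/-- A `W`-invariant inner product on `V'`. -/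
structure WInvInner where
  form : V' →ₗ[ℝ] V' →ₗ[ℝ] ℝ
  symm : ∀ x y, form x y = form y x
  posdef : ∀ x, x ≠ 0 → 0 < form x x
  invariant : ∀ g ∈ D.weyl, ∀ x y, form (g.2 x) (g.2 y) = form x y

/-- `β` is a root whose coroot is short: for every `W`-invariant inner product `B` on `V'`,
`B(β∨, β∨) ≤ B(α∨, α∨)` for every root `α` in the same irreducible component as `β`. -/
def IsShortCoroot (β : V) : Prop :=
  β ∈ D.R ∧ ∀ B : D.WInvInner, ∀ α ∈ D.R, D.SameComponent α β →
    B.form (D.coroot β) (D.coroot β) ≤ B.form (D.coroot α) (D.coroot α)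

end RootSystemData

/-!
Take `δ` maximizing `⟨δ, μ⟩` over the roots and, among the maximizers, of minimal height. For a
positive root `β` with `⟨β, μ - δ∨⟩ < 0`, the root `⟨β, δ∨⟩ δ - β` would either pair with `μ` more
than `δ` does or be a maximizer of smaller height; so `μ - δ∨` is dominant, and since `δ∨ ∈ Q∨₊`
minimality of `μ` gives `μ = δ∨`. Hence every root pairs with `μ` to at most `2`.

If some root `γ ≠ δ` also has `⟨γ, δ∨⟩ = 2`, take such a `γ` of maximal height. Finiteness of `R`
forces `⟨δ, γ∨⟩ = 1`, so `γ∨ - δ∨` is the coroot of a negative root, i.e. `γ∨ ≤ μ`; maximality of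
the height makes `γ∨` dominant, and minimality of `μ` then gives `γ∨ = μ`, contradicting
`⟨δ, γ∨⟩ = 1`.
-/

theorem Finset.eq_zero_of_add_smul_mem_succ {V : Type*} [AddCommGroup V] [Module ℝ V]
    (s : Finset V) {a c : V} (ha : a ∈ s)
    (hstep : ∀ n : ℕ, a + (n : ℝ) • c ∈ s → a + ((n : ℝ) + 1) • c ∈ s) : c = 0 := by
  by_contra hc
  have hmem : ∀ n : ℕ, a + (n : ℝ) • c ∈ s := by
    intro n
    induction n with
    | zero => simpa using ha
    | succ n ih => exact_mod_cast hstep n ih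
  have hinj : Function.Injective fun n : ℕ => a + (n : ℝ) • c :=
    (add_right_injective a).comp ((smul_left_injective ℝ hc).comp Nat.cast_injective)
  exact s.finite_toSet.not_infinite (Set.infinite_of_injective_forall_mem hinj hmem)

namespace RootSystemData

variable {V V' : Type} [AddCommGroup V] [Module ℝ V] [FiniteDimensional ℝ V]
  [AddCommGroup V'] [Module ℝ V'] [FiniteDimensional ℝ V']
  (D : RootSystemData V V')

theorem coroot_ne_zero {α : V} (hα : α ∈ D.R) : D.coroot α ≠ 0 := by
  intro h
  simpa [h] using D.pair_self_eq_two α hα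

theorem pair_coroot_eq_zero_of_pair_coroot_eq_zero {α β : V} (hα : α ∈ D.R) (hβ : β ∈ D.R)
    (h : D.pair β (D.coroot α) = 0) : D.pair α (D.coroot β) = 0 := by
  set p := D.pair α (D.coroot β)
  -- `-(s_α ∘ s_β)` translates `α + t • β` by `p • β`.
  have hstep : ∀ n : ℕ, α + (n : ℝ) • p • β ∈ D.R → α + ((n : ℝ) + 1) • p • β ∈ D.R := by
    intro n hn
    have h₁ := D.reflect_root_mem β hβ _ hn
    have h₂ := D.neg_mem _ (D.reflect_root_mem α hα _ h₁)
    convert h₂ using 1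
    simp only [map_add, map_sub, map_smul, LinearMap.add_apply, LinearMap.sub_apply,
      LinearMap.smul_apply, smul_eq_mul, h, D.pair_self_eq_two α hα, D.pair_self_eq_two β hβ, p]
    module
  have := D.R.eq_zero_of_add_smul_mem_succ hα hstep
  exact (smul_eq_zero.mp this).resolve_right (D.root_ne_zero β hβ)

theorem eq_of_pair_coroot_eq_two {α β : V} (hα : α ∈ D.R) (hβ : β ∈ D.R)
    (hαβ : D.pair α (D.coroot β) = 2) (hβα : D.pair β (D.coroot α) = 2) : α = β := by
  -- `s_α ∘ s_β` translates `α + t • (α - β)` by `2 • (α - β)`.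
  have hstep : ∀ n : ℕ, α + (n : ℝ) • (2 : ℝ) • (α - β) ∈ D.R →
      α + ((n : ℝ) + 1) • (2 : ℝ) • (α - β) ∈ D.R := by
    intro n hn
    have h₁ := D.reflect_root_mem β hβ _ hn
    have h₂ := D.reflect_root_mem α hα _ h₁
    convert h₂ using 1
    simp only [map_add, map_sub, map_smul, LinearMap.add_apply, LinearMap.sub_apply,
      LinearMap.smul_apply, smul_eq_mul, hαβ, hβα, D.pair_self_eq_two α hα, D.pair_self_eq_two β hβ]
    module
  have := D.R.eq_zero_of_add_smul_mem_succ hα hstep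
  simpa [sub_eq_zero] using this

theorem exists_height : ∃ L : V →ₗ[ℝ] ℝ, ∀ α ∈ D.Rpos, 0 < L α := by
  obtain ⟨L, hL⟩ := Module.exists_dual_forall_apply_eq_one (v := id) D.base_indep
  have key : ∀ x ∈ AddSubmonoid.closure (D.Δ : Set V), x = 0 ∨ 0 < L x := by
    intro x hx
    induction hx using AddSubmonoid.closure_induction with
    | mem y hy => exact Or.inr (by rw [show L y = 1 from hL y hy]; exact one_pos)
    | zero => simp
    | add y z _ _ hy hz =>
      rcases hy with rfl | hy
      · simpa using hz
      · rcases hz with rfl | hz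
        · simpa using Or.inr hy
        · exact Or.inr (by simpa using add_pos hy hz)
  refine ⟨L, fun α hα => ?_⟩
  obtain ⟨hαR, hαΔ⟩ := Finset.mem_filter.mp hα
  exact (key α hαΔ).resolve_left (D.root_ne_zero α hαR)

theorem coroot_mem_Qpos {α : V} (hα : α ∈ D.Rpos) : D.coroot α ∈ D.Qpos :=
  AddSubmonoid.subset_closure ⟨α, hα, rfl⟩

theorem mem_Rpos_of_pair_pos {μ : V'} (hμ : D.Dominant μ) {α : V} (hα : α ∈ D.R)
    (h : 0 < D.pair α μ) : α ∈ D.Rpos := by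
  refine Finset.mem_filter.mpr ⟨hα, (D.base_generates α hα).resolve_right fun hneg => ?_⟩
  have := hμ (-α) (Finset.mem_filter.mpr ⟨D.neg_mem α hα, hneg⟩)
  simp only [map_neg, LinearMap.neg_apply] at this
  linarith

theorem dominant_sub_coroot {μ : V'} (hμ : μ ∈ D.Xplus) {L : V →ₗ[ℝ] ℝ}
    (hL : ∀ α ∈ D.Rpos, 0 < L α) {δ : V} (hδ : δ ∈ D.R) (hδμ : 1 < D.pair δ μ)
    (hmax : ∀ α ∈ D.R, D.pair α μ ≤ D.pair δ μ)
    (hmin : ∀ α ∈ D.R, D.pair α μ = D.pair δ μ → L δ ≤ L α) :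
    D.Dominant (μ - D.coroot δ) := by
  intro β hβ
  by_contra hneg
  have hβR : β ∈ D.R := (Finset.mem_filter.mp hβ).1
  obtain ⟨b, hb⟩ := D.pair_X_int β hβR μ hμ.1
  obtain ⟨k, hk⟩ := D.crystallographic β hβR δ hδ
  have hb0 : (0 : ℝ) ≤ b := hb ▸ hμ.2 β hβ
  have hbk : (b : ℝ) + 1 ≤ k := by
    have : (b : ℝ) < k := by simp only [map_sub, not_le, sub_neg, hb, hk] at hneg; exact hneg
    exact_mod_cast Int.add_one_le_of_lt (by exact_mod_cast this)
  -- `ε = k δ - β = -s_δ β` pairs with `μ` to at least `k (⟨δ, μ⟩ - 1) + 1`, so maximality forces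
  -- `k = 1` and `b = 0`, and then `ε = δ - β` is a maximizer of smaller height.
  have hε : (k : ℝ) • δ - β ∈ D.R := by
    simpa [hk] using D.neg_mem _ (D.reflect_root_mem δ hδ β hβR)
  have hεμ : D.pair ((k : ℝ) • δ - β) μ = k * D.pair δ μ - b := by simp [hb]
  have hεmax := hmax _ hε
  rw [hεμ] at hεmax
  have hk1 : (k : ℝ) = 1 := by nlinarith
  have hb1 : (b : ℝ) = 0 := by linarith
  have := hmin _ hε (by rw [hεμ, hk1, hb1]; ring)
  simp only [hk1, one_smul, map_sub] at this
  linarith [hL β hβ]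

theorem eq_coroot_of_dominant_sub_coroot {μ : V'} (hμ : μ ∈ D.MSet) {δ : V} (hδ : δ ∈ D.Rpos)
    (hdom : D.Dominant (μ - D.coroot δ)) : μ = D.coroot δ := by
  have hδR : δ ∈ D.R := (Finset.mem_filter.mp hδ).1
  by_contra hne
  have hmem : μ - D.coroot δ ∈ D.Xplus := ⟨sub_mem hμ.1.1 (D.coroot_mem_X δ hδR), hdom⟩
  have hle : D.leQ (μ - D.coroot δ) μ := by
    simpa [leQ] using D.coroot_mem_Qpos hδ
  have := hμ.2.2 _ hmem (sub_ne_zero.mpr hne) hle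
  exact D.coroot_ne_zero hδR (by simpa using this)

theorem exists_eq_coroot {μ : V'} (hμ : μ ∈ D.MSet) {γ : V} (hγ : γ ∈ D.R)
    (h2 : 2 ≤ D.pair γ μ) : ∃ δ ∈ D.R, μ = D.coroot δ ∧ ∀ α ∈ D.R, D.pair α μ ≤ 2 := by
  obtain ⟨L, hL⟩ := D.exists_height
  obtain ⟨δ₀, hδ₀, hmax⟩ := D.R.exists_max_image (D.pair · μ) ⟨γ, hγ⟩
  obtain ⟨δ, hδ, hmin⟩ := (D.R.filter (D.pair · μ = D.pair δ₀ μ)).exists_min_image L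
    ⟨δ₀, Finset.mem_filter.mpr ⟨hδ₀, rfl⟩⟩
  obtain ⟨hδR, hδδ₀⟩ := Finset.mem_filter.mp hδ
  have hδ2 : 2 ≤ D.pair δ μ := hδδ₀ ▸ (h2.trans (hmax γ hγ))
  have hdom := D.dominant_sub_coroot hμ.1 hL hδR (by linarith)
    (fun α hα => hδδ₀ ▸ hmax α hα)
    (fun α hα hαδ => hmin α (Finset.mem_filter.mpr ⟨hα, hαδ.trans hδδ₀⟩))
  have hμδ := D.eq_coroot_of_dominant_sub_coroot hμ
    (D.mem_Rpos_of_pair_pos hμ.1.2 hδR (by linarith)) hdom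
  refine ⟨δ, hδR, hμδ, fun α hα => ?_⟩
  calc D.pair α μ ≤ D.pair δ μ := hδδ₀ ▸ hmax α hα
    _ = 2 := by rw [hμδ, D.pair_self_eq_two δ hδR]

theorem pair_coroot_eq_one {δ v : V} (hδ : δ ∈ D.R) (hv : v ∈ D.R) (hne : v ≠ δ)
    (hle : ∀ α ∈ D.R, D.pair α (D.coroot δ) ≤ 2) (hv2 : D.pair v (D.coroot δ) = 2) :
    D.pair δ (D.coroot v) = 1 := by
  obtain ⟨d, hd⟩ := D.crystallographic δ hδ v hv
  have hs := D.reflect_root_mem v hv δ hδ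
  have hup := hle _ hs
  have hlow := hle _ (D.neg_mem _ hs)
  simp only [map_sub, map_neg, map_smul, LinearMap.sub_apply, LinearMap.neg_apply,
    LinearMap.smul_apply, smul_eq_mul, hd, hv2, D.pair_self_eq_two δ hδ] at hup hlow
  have hd0 : d ≠ 0 := fun h => by
    simpa [hv2] using D.pair_coroot_eq_zero_of_pair_coroot_eq_zero hv hδ (by simp [hd, h])
  have hd2 : d ≠ 2 := fun h => hne (D.eq_of_pair_coroot_eq_two hv hδ hv2 (by simp [hd, h]))
  have : 0 ≤ d := by exact_mod_cast (show (0 : ℝ) ≤ d by linarith)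
  have : d ≤ 2 := by exact_mod_cast (show (d : ℝ) ≤ 2 by linarith)
  rw [hd, show d = 1 by omega, Int.cast_one]

theorem leQ_coroot_of_pair_coroot_eq_one {δ v : V} (hδ : δ ∈ D.R) (hv : v ∈ D.R)
    (hdom : D.Dominant (D.coroot δ)) (hv2 : D.pair v (D.coroot δ) = 2)
    (hδ1 : D.pair δ (D.coroot v) = 1) : D.leQ (D.coroot v) (D.coroot δ) := by
  obtain ⟨w, hw, hwv⟩ := D.reflect_coroot_mem δ hδ v hv
  rw [hδ1, one_smul] at hwv
  have hvw : D.pair v (D.coroot w) = 0 := by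
    rw [hwv, map_sub, hv2, D.pair_self_eq_two v hv, sub_self]
  have hwv0 := D.pair_coroot_eq_zero_of_pair_coroot_eq_zero hw hv hvw
  have hww := D.pair_self_eq_two w hw
  rw [hwv, map_sub, hwv0] at hww
  have hpos : -w ∈ D.Rpos := D.mem_Rpos_of_pair_pos hdom (D.neg_mem w hw)
    (by rw [map_neg, LinearMap.neg_apply]; linarith)
  simpa [leQ, D.coroot_neg w hw, hwv] using D.coroot_mem_Qpos hpos

theorem dominant_coroot {δ v : V} (hδ : δ ∈ D.R) (hdom : D.Dominant (D.coroot δ))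
    (hle : ∀ α ∈ D.R, D.pair α (D.coroot δ) ≤ 2) {L : V →ₗ[ℝ] ℝ}
    (hL : ∀ α ∈ D.Rpos, 0 < L α) (hv : v ∈ D.R) (hv2 : D.pair v (D.coroot δ) = 2)
    (hmax : ∀ α ∈ D.R, D.pair α (D.coroot δ) = 2 → L v < L α → α = δ) :
    D.Dominant (D.coroot v) := by
  intro x hx
  by_contra hneg
  have hxR : x ∈ D.R := (Finset.mem_filter.mp hx).1
  obtain ⟨k, hk⟩ := D.crystallographic x hxR v hv
  have hx0 := hdom x hx
  have hs := hle _ (D.reflect_root_mem v hv x hxR)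
  simp only [map_sub, map_smul, LinearMap.sub_apply, LinearMap.smul_apply, smul_eq_mul,
    hk, hv2] at hs
  have hk1 : k = -1 := by
    have : k < 0 := by exact_mod_cast (show (k : ℝ) < 0 by rw [← hk]; exact not_le.mp hneg)
    have : -1 ≤ k := by exact_mod_cast (show (-1 : ℝ) ≤ k by linarith)
    omega
  have hxδ : D.pair x (D.coroot δ) = 0 := by
    rw [hk1, Int.cast_neg, Int.cast_one] at hs
    linarith
  have hLx := hL x hx
  -- `x + v = s_v x` and `v + 2 x = s_x v` both lie strictly above `v` and pair to `2` with `δ∨`.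
  have hxv : x + v = δ := by
    have := D.reflect_root_mem v hv x hxR
    rw [hk, hk1, Int.cast_neg, Int.cast_one, neg_smul, one_smul, sub_neg_eq_add] at this
    exact hmax _ this (by simp [hxδ, hv2]) (by rw [map_add]; linarith)
  have hδx := D.pair_coroot_eq_zero_of_pair_coroot_eq_zero hδ hxR hxδ
  have hvx : D.pair v (D.coroot x) = -2 := by
    rw [show v = δ - x by rw [← hxv]; abel, map_sub, LinearMap.sub_apply, hδx,
      D.pair_self_eq_two x hxR]
    norm_num
  have hvxx : v + (2 : ℝ) • x = δ := by
    have := D.reflect_root_mem x hxR v hv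
    rw [hvx, neg_smul, sub_neg_eq_add] at this
    exact hmax _ this (by simp [hxδ, hv2]) (by rw [map_add, map_smul, smul_eq_mul]; linarith)
  exact D.root_ne_zero x hxR (by
    rw [show x = v + (2 : ℝ) • x - (x + v) by module, hvxx, hxv, sub_self])

theorem eq_of_pair_coroot_eq_two_of_coroot_mem_MSet {δ : V} (hδ : δ ∈ D.R)
    (hμ : D.coroot δ ∈ D.MSet) (hle : ∀ α ∈ D.R, D.pair α (D.coroot δ) ≤ 2) {γ : V}
    (hγ : γ ∈ D.R) (h2 : D.pair γ (D.coroot δ) = 2) : γ = δ := by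
  by_contra hne
  obtain ⟨L, hL⟩ := D.exists_height
  obtain ⟨v, hvS, hvmax⟩ :=
    (D.R.filter fun α => D.pair α (D.coroot δ) = 2 ∧ α ≠ δ).exists_max_image L
      ⟨γ, Finset.mem_filter.mpr ⟨hγ, h2, hne⟩⟩
  obtain ⟨hv, hv2, hvδ⟩ := Finset.mem_filter.mp hvS
  have hδ1 := D.pair_coroot_eq_one hδ hv hvδ hle hv2
  have hdom := D.dominant_coroot hδ hμ.1.2 hle hL hv hv2 fun α hα hα2 hLα => by
    by_contra hαδ
    exact not_lt_of_ge (hvmax α (Finset.mem_filter.mpr ⟨hα, hα2, hαδ⟩)) hLα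
  have := hμ.2.2 (D.coroot v) ⟨D.coroot_mem_X v hv, hdom⟩ (D.coroot_ne_zero hv)
    (D.leQ_coroot_of_pair_coroot_eq_one hδ hv hμ.1.2 hv2 hδ1)
  rw [this, D.pair_self_eq_two δ hδ] at hδ1
  norm_num at hδ1

end RootSystemData

theorem minimal_ge_two_unique {V V' : Type} [AddCommGroup V] [Module ℝ V] [FiniteDimensional ℝ V]
    [AddCommGroup V'] [Module ℝ V'] [FiniteDimensional ℝ V']
    (D : RootSystemData V V')
    (μ : V') (hμ : μ ∈ D.MSet) (γ : V) (hγ : γ ∈ D.R)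
    (h2 : 2 ≤ D.pair γ μ) :
    μ = D.coroot γ ∧ ∀ γ' ∈ D.R, 2 ≤ D.pair γ' μ → γ' = γ := by
  obtain ⟨δ, hδ, rfl, hle⟩ := D.exists_eq_coroot hμ hγ h2
  have hunique : ∀ γ' ∈ D.R, 2 ≤ D.pair γ' (D.coroot δ) → γ' = δ := fun γ' hγ' h2' =>
    D.eq_of_pair_coroot_eq_two_of_coroot_mem_MSet hδ hμ hle hγ' (le_antisymm (hle γ' hγ') h2')
  obtain rfl := hunique γ hγ h2
  exact ⟨rfl, hunique⟩

end
end

section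
/- For every χ ∈ X∨ there exists μ ∈ M ∪ {0} such that χ − μ ∈ Q∨. In other words, M ∪ {0} contains a system of representatives of the quotient group X∨/Q∨. -/
open scoped BigOperators Classical

noncomputable section

/-!
Reflecting `χ` by a simple root `β` with `⟨β, χ⟩ < 0` changes it by a multiple of `β∨` and
strictly decreases the number of positive roots pairing negatively with it, so `χ` is congruent
mod `Q∨` to a dominant `ν`, which is nonzero unless `χ ∈ Q∨`. The height `⟨2ρ, ·⟩` is
nonnegative on dominant elements, and `⟨2ρ, β∨⟩` is a positive integer for every positive root
`β`, so the height drops by at least one along every strict step of `≤`. Hence descending from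
`ν` terminates in an element of `M`, still congruent to `χ` because `Q∨₊ ⊆ Q∨`.
-/

namespace RootSystemData

variable {V V' : Type} [AddCommGroup V] [Module ℝ V] [FiniteDimensional ℝ V]
  [AddCommGroup V'] [Module ℝ V'] [FiniteDimensional ℝ V']
  (D : RootSystemData V V')

lemma mem_Rpos {α : V} : α ∈ D.Rpos ↔ α ∈ D.R ∧ α ∈ AddSubmonoid.closure (D.Δ : Set V) :=
  Finset.mem_filter

lemma mem_closure_of_add_mem_span {S : Finset V} (hS : S ⊆ D.Δ) {x y : V}
    (hx : x ∈ AddSubmonoid.closure (D.Δ : Set V)) (hy : y ∈ AddSubmonoid.closure (D.Δ : Set V))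
    (hxy : x + y ∈ Submodule.span ℝ (S : Set V)) : x ∈ AddSubmonoid.closure (S : Set V) := by
  obtain ⟨f, hf, rfl⟩ := AddSubmonoid.mem_closure_finset.mp hx
  obtain ⟨g, -, rfl⟩ := AddSubmonoid.mem_closure_finset.mp hy
  obtain ⟨r, hr, hsum⟩ := Submodule.mem_span_finset.mp hxy
  rw [Finset.sum_subset hS fun a _ ha => by rw [Function.notMem_support.mp (ha <| hr ·), zero_smul]]
    at hsum
  have hcoeff : ∀ a ∈ D.Δ, (f a + g a : ℝ) - r a = 0 := by
    refine linearIndepOn_finset_iff.mp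
      (show LinearIndepOn ℝ id (D.Δ : Set V) from D.base_indep) _ ?_
    simp only [sub_smul, add_smul, Finset.sum_sub_distrib, Finset.sum_add_distrib,
      Nat.cast_smul_eq_nsmul, id, hsum, sub_self]
  have hfS : Function.support f ⊆ S := by
    intro a ha
    by_contra haS
    have := hcoeff a (hf ha)
    rw [Function.notMem_support.mp (haS <| hr ·)] at this
    exact ha (by exact_mod_cast (by linarith [(g a).cast_nonneg (α := ℝ)] : (f a : ℝ) = 0))
  refine AddSubmonoid.mem_closure_finset.mpr ⟨f, hfS, ?_⟩
  exact Finset.sum_subset hS fun a _ ha => by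
    rw [Function.notMem_support.mp (ha <| hfS ·), zero_smul]

lemma mem_R_of_mem_Rpos {α : V} (hα : α ∈ D.Rpos) : α ∈ D.R := (D.mem_Rpos.1 hα).1

lemma neg_notMem_Rpos {α : V} (hα : α ∈ D.Rpos) : -α ∉ D.Rpos := by
  intro hneg
  have h0 := D.mem_closure_of_add_mem_span (Finset.empty_subset _) (D.mem_Rpos.1 hα).2
    (D.mem_Rpos.1 hneg).2 (by simp)
  simp only [Finset.coe_empty, AddSubmonoid.closure_empty, AddSubmonoid.mem_bot] at h0
  exact D.root_ne_zero α (D.mem_R_of_mem_Rpos hα) h0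

lemma neg_mem_Rpos_of_notMem {α : V} (hα : α ∈ D.R) (h : α ∉ D.Rpos) : -α ∈ D.Rpos :=
  (D.base_generates α hα).elim (fun hc => absurd (D.mem_Rpos.2 ⟨hα, hc⟩) h)
    fun hc => D.mem_Rpos.2 ⟨D.neg_mem α hα, hc⟩

lemma leQ_refl (x : V') : D.leQ x x := by
  rw [leQ, sub_self]
  exact zero_mem _

lemma leQ_trans {x y z : V'} (hxy : D.leQ x y) (hyz : D.leQ y z) : D.leQ x z := by
  rw [leQ, ← sub_add_sub_cancel]
  exact add_mem hyz hxy

lemma coroot_mem_Qc {α : V} (hα : α ∈ D.R) : D.coroot α ∈ D.Qc :=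
  AddSubgroup.subset_closure ⟨α, hα, rfl⟩

lemma Qpos_le_Qc : D.Qpos ≤ D.Qc.toAddSubmonoid :=
  AddSubmonoid.closure_le.2 fun _ ⟨_, hα, h⟩ => h ▸ D.coroot_mem_Qc (D.mem_R_of_mem_Rpos hα)

lemma Qc_le_X : D.Qc ≤ D.X :=
  AddSubgroup.closure_le _ |>.2 fun _ ⟨α, hα, h⟩ => h ▸ D.coroot_mem_X α hα

lemma reflV_apply {α : V} (hα : α ∈ D.R) (v : V) :
    D.reflV α hα v = v - D.pair v (D.coroot α) • α :=
  Module.reflection_apply _ _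

lemma reflV'_apply {α : V} (hα : α ∈ D.R) (x : V') :
    D.reflV' α hα x = x - D.pair α x • D.coroot α :=
  Module.reflection_apply _ _

lemma reflV_self {α : V} (hα : α ∈ D.R) : D.reflV α hα α = -α :=
  Module.reflection_apply_self _

lemma reflV_reflV {α : V} (hα : α ∈ D.R) (v : V) : D.reflV α hα (D.reflV α hα v) = v :=
  Module.involutive_reflection _ v

lemma reflV_mem_R {α β : V} (hα : α ∈ D.R) (hβ : β ∈ D.R) : D.reflV α hα β ∈ D.R := by
  rw [reflV_apply]
  exact D.reflect_root_mem α hα β hβ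

lemma pair_reflV' {α : V} (hα : α ∈ D.R) (v : V) (x : V') :
    D.pair v (D.reflV' α hα x) = D.pair (D.reflV α hα v) x := by
  simp only [reflV_apply, reflV'_apply, map_sub, map_smul, LinearMap.sub_apply,
    LinearMap.smul_apply, smul_eq_mul]
  ring

lemma pair_reflV_coroot {α : V} (hα : α ∈ D.R) (v : V) :
    D.pair (D.reflV α hα v) (D.coroot α) = -D.pair v (D.coroot α) := by
  rw [← pair_reflV', reflV'_apply, D.pair_self_eq_two α hα, map_sub, map_smul, smul_eq_mul]
  ring

lemma exists_nsmul_of_reflV_notMem_Rpos {β α : V} (hβ : β ∈ D.Δ) (hα : α ∈ D.Rpos)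
    (h : D.reflV β (D.base_subset hβ) α ∉ D.Rpos) : ∃ n : ℕ, 0 < n ∧ α = n • β := by
  have hαR := D.mem_R_of_mem_Rpos hα
  have hneg := D.neg_mem_Rpos_of_notMem (D.reflV_mem_R _ hαR) h
  have hmul := D.mem_closure_of_add_mem_span (S := {β}) (by simpa using hβ) (D.mem_Rpos.1 hα).2
    (D.mem_Rpos.1 hneg).2 (by
      rw [reflV_apply, neg_sub, add_sub_cancel]
      exact Submodule.smul_mem _ _ (Submodule.subset_span (by simp)))
  obtain ⟨n, hn⟩ := AddSubmonoid.mem_closure_singleton.mp (by simpa using hmul)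
  refine ⟨n, Nat.pos_of_ne_zero ?_, hn.symm⟩
  rintro rfl
  exact D.root_ne_zero α hαR (by simpa using hn.symm)

lemma dominant_of_forall_base {ν : V'} (h : ∀ β ∈ D.Δ, 0 ≤ D.pair β ν) : D.Dominant ν := by
  intro α hα
  obtain ⟨-, hcl⟩ := D.mem_Rpos.1 hα
  clear hα
  induction hcl using AddSubmonoid.closure_induction with
  | mem β hβ => exact h β hβ
  | zero => simp
  | add x y _ _ hx hy => rw [map_add, LinearMap.add_apply]; linarith

lemma reflV'_sub_mem_Qc {α : V} (hα : α ∈ D.R) {x : V'} (hx : x ∈ D.X) :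
    D.reflV' α hα x - x ∈ D.Qc := by
  obtain ⟨m, hm⟩ := D.pair_X_int α hα x hx
  rw [reflV'_apply, sub_sub_cancel_left, hm, Int.cast_smul_eq_zsmul]
  exact D.Qc.neg_mem (zsmul_mem (D.coroot_mem_Qc hα) m)

lemma card_filter_pair_reflV'_neg_lt {β : V} (hβ : β ∈ D.Δ) {ν : V'} (hν : D.pair β ν < 0) :
    (D.Rpos.filter (D.pair · (D.reflV' β (D.base_subset hβ) ν) < 0)).card <
      (D.Rpos.filter (D.pair · ν < 0)).card := by
  set s := D.reflV β (D.base_subset hβ)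
  -- An involution of `R₊`: `s` where it keeps roots positive; it fixes the multiples of `β`.
  let ψ : V → V := fun α => if s α ∈ D.Rpos then s α else α
  have hψψ : Set.LeftInvOn ψ ψ D.Rpos := by
    intro α hα
    by_cases h : s α ∈ D.Rpos
    · simp [ψ, h, s, reflV_reflV, Finset.mem_coe.1 hα]
    · simp [ψ, h]
  have hβneg : β ∈ D.Rpos.filter (D.pair · ν < 0) :=
    Finset.mem_filter.2 ⟨D.mem_Rpos.2 ⟨D.base_subset hβ, AddSubmonoid.subset_closure hβ⟩, hν⟩
  refine lt_of_le_of_lt (Finset.card_le_card_of_injOn ψ ?_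
    (hψψ.injOn.mono (Finset.coe_subset.2 (Finset.filter_subset _ _))))
    (Finset.card_erase_lt_of_mem hβneg)
  intro α hα
  simp only [Finset.coe_filter, Set.mem_ofPred_eq, pair_reflV'] at hα
  obtain ⟨hαpos, hαneg⟩ := hα
  simp only [Finset.coe_erase, Finset.coe_filter, Set.mem_sdiff, Set.mem_ofPred_eq,
    Set.mem_singleton_iff]
  by_cases h : s α ∈ D.Rpos
  · simp only [ψ, if_pos h]
    refine ⟨⟨h, hαneg⟩, fun hsβ => D.neg_notMem_Rpos (Finset.mem_filter.1 hβneg).1 ?_⟩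
    have hαβ : α = -β := calc
      α = s (s α) := (D.reflV_reflV _ α).symm
      _ = s β := by rw [hsβ]
      _ = -β := D.reflV_self _
    exact hαβ ▸ hαpos
  · simp only [ψ, if_neg h]
    obtain ⟨n, hn, rfl⟩ := D.exists_nsmul_of_reflV_notMem_Rpos hβ hαpos h
    refine ⟨⟨hαpos, ?_⟩, fun hnβ => ?_⟩
    · rw [← Nat.cast_smul_eq_nsmul ℝ, map_smul, LinearMap.smul_apply, smul_eq_mul]
      exact mul_neg_of_pos_of_neg (by exact_mod_cast hn) hν
    · rw [hnβ, D.reflV_self, map_neg, LinearMap.neg_apply] at hαneg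
      linarith

lemma exists_dominant_sub_mem_Qc {ν : V'} (hν : ν ∈ D.X) :
    ∃ ν' ∈ D.X, D.Dominant ν' ∧ ν' - ν ∈ D.Qc := by
  induction hN : (D.Rpos.filter (D.pair · ν < 0)).card using Nat.strong_induction_on
    generalizing ν with
  | _ N ih =>
  by_cases hdom : D.Dominant ν
  · exact ⟨ν, hν, hdom, by simp⟩
  obtain ⟨β, hβ, hβν⟩ : ∃ β ∈ D.Δ, D.pair β ν < 0 := by
    by_contra! h
    exact hdom (D.dominant_of_forall_base h)
  have hstep := D.reflV'_sub_mem_Qc (D.base_subset hβ) hν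
  obtain ⟨ν', hν'X, hν'dom, hν'⟩ := ih _ (hN ▸ D.card_filter_pair_reflV'_neg_lt hβ hβν)
    (by simpa using add_mem (D.Qc_le_X hstep) hν) rfl
  exact ⟨ν', hν'X, hν'dom, by simpa using add_mem hν' hstep⟩

lemma pair_coroot_pos_of_reflV_notMem_Rpos {β α : V} (hβ : β ∈ D.Rpos) (hα : α ∈ D.Rpos)
    (h : D.reflV β (D.mem_R_of_mem_Rpos hβ) α ∉ D.Rpos) : 0 < D.pair α (D.coroot β) := by
  by_contra! hle
  obtain ⟨z, hz⟩ := D.crystallographic α (D.mem_R_of_mem_Rpos hα) β (D.mem_R_of_mem_Rpos hβ)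
  obtain ⟨n, rfl⟩ := Int.exists_eq_neg_ofNat (by exact_mod_cast hz ▸ hle : z ≤ 0)
  refine h (D.mem_Rpos.2 ⟨D.reflV_mem_R _ (D.mem_R_of_mem_Rpos hα), ?_⟩)
  rw [reflV_apply, hz, Int.cast_neg, Int.cast_natCast, neg_smul, sub_neg_eq_add,
    Nat.cast_smul_eq_nsmul]
  exact add_mem (D.mem_Rpos.1 hα).2 (nsmul_mem (D.mem_Rpos.1 hβ).2 n)

lemma pair_two_smul_rho (x : V') : D.pair ((2 : ℝ) • D.rho) x = ∑ α ∈ D.Rpos, D.pair α x := by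
  simp [rho, smul_smul, map_sum]

lemma pair_two_smul_rho_coroot_pos {β : V} (hβ : β ∈ D.Rpos) :
    0 < D.pair ((2 : ℝ) • D.rho) (D.coroot β) := by
  have hβR := D.mem_R_of_mem_Rpos hβ
  set s := D.reflV β hβR
  rw [pair_two_smul_rho, ← Finset.sum_filter_add_sum_filter_not D.Rpos (fun α => s α ∈ D.Rpos)]
  -- `s` pairs off the positive roots it keeps positive, with opposite pairings against `β∨`;
  -- each remaining positive root pairs positively with `β∨`, and `β` is one of them.
  have hcancel : ∑ α ∈ D.Rpos with s α ∈ D.Rpos, D.pair α (D.coroot β) = 0 := by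
    refine Finset.sum_involution (fun α _ => s α)
      (fun α _ => by rw [D.pair_reflV_coroot, add_neg_cancel]) (fun α _ hα hfix => ?_)
      (fun α hα => ?_) (fun α _ => D.reflV_reflV hβR α)
    · have := D.pair_reflV_coroot hβR α
      rw [hfix] at this
      exact hα (by linarith)
    · rw [Finset.mem_filter] at hα ⊢
      exact ⟨hα.2, by rw [D.reflV_reflV]; exact hα.1⟩
  rw [hcancel, zero_add]
  refine Finset.sum_pos (fun α hα => ?_) ⟨β, ?_⟩
  · rw [Finset.mem_filter] at hα
    exact D.pair_coroot_pos_of_reflV_notMem_Rpos hβ hα.1 hα.2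
  · rw [Finset.mem_filter, reflV_self]
    exact ⟨hβ, D.neg_notMem_Rpos hβ⟩

lemma one_le_pair_two_smul_rho_coroot {β : V} (hβ : β ∈ D.Rpos) :
    1 ≤ D.pair ((2 : ℝ) • D.rho) (D.coroot β) := by
  obtain ⟨z, hz⟩ : ∃ z : ℤ, D.pair ((2 : ℝ) • D.rho) (D.coroot β) = z := by
    rw [pair_two_smul_rho]
    refine Finset.sum_induction (fun α => D.pair α (D.coroot β)) (fun x => ∃ z : ℤ, x = z) ?_
      ⟨0, by simp⟩
      fun α hα => D.crystallographic α (D.mem_R_of_mem_Rpos hα) β (D.mem_R_of_mem_Rpos hβ)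
    rintro _ _ ⟨a, rfl⟩ ⟨b, rfl⟩
    exact ⟨a + b, by push_cast; rfl⟩
  have hpos := D.pair_two_smul_rho_coroot_pos hβ
  rw [hz] at hpos ⊢
  exact_mod_cast (show (0 : ℤ) < z by exact_mod_cast hpos)

lemma one_le_pair_two_smul_rho_of_mem_Qpos {q : V'} (hq : q ∈ D.Qpos) (h0 : q ≠ 0) :
    1 ≤ D.pair ((2 : ℝ) • D.rho) q := by
  suffices q = 0 ∨ 1 ≤ D.pair ((2 : ℝ) • D.rho) q from this.resolve_left h0
  clear h0
  induction hq using AddSubmonoid.closure_induction with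
  | mem x hx =>
    obtain ⟨β, hβ, rfl⟩ := hx
    exact Or.inr (D.one_le_pair_two_smul_rho_coroot hβ)
  | zero => exact Or.inl rfl
  | add x y _ _ hx hy =>
    rcases hx with rfl | hx <;> rcases hy with rfl | hy
    · exact Or.inl (add_zero 0)
    · simpa using Or.inr hy
    · simpa using Or.inr hx
    · exact Or.inr (by rw [map_add]; linarith)

lemma pair_two_smul_rho_nonneg {x : V'} (hx : D.Dominant x) : 0 ≤ D.pair ((2 : ℝ) • D.rho) x := by
  rw [pair_two_smul_rho]
  exact Finset.sum_nonneg hx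

lemma exists_mem_MSet_leQ {ν : V'} (hν : ν ∈ D.Xplus) (hν0 : ν ≠ 0) :
    ∃ μ ∈ D.MSet, D.leQ μ ν := by
  obtain ⟨n, hn⟩ := exists_nat_gt (D.pair ((2 : ℝ) • D.rho) ν)
  induction n generalizing ν with
  | zero => exact absurd hn (not_lt.2 (by exact_mod_cast D.pair_two_smul_rho_nonneg hν.2))
  | succ n ih =>
    by_cases hM : ν ∈ D.MSet
    · exact ⟨ν, hM, D.leQ_refl ν⟩
    obtain ⟨ν', hν', hν'0, hle, hne⟩ : ∃ ν' ∈ D.Xplus, ν' ≠ 0 ∧ D.leQ ν' ν ∧ ν' ≠ ν := by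
      simpa [MSet, hν, hν0] using hM
    have hdrop := D.one_le_pair_two_smul_rho_of_mem_Qpos hle (sub_ne_zero.2 hne.symm)
    rw [map_sub] at hdrop
    push_cast at hn
    obtain ⟨μ, hμ, hμle⟩ := ih hν' hν'0 (by linarith)
    exact ⟨μ, hμ, D.leQ_trans hμle hle⟩

end RootSystemData

theorem M_represents_X_mod_Q {V V' : Type} [AddCommGroup V] [Module ℝ V] [FiniteDimensional ℝ V]
    [AddCommGroup V'] [Module ℝ V'] [FiniteDimensional ℝ V']
    (D : RootSystemData V V')
    (χ : V') (hχ : χ ∈ D.X) :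
    ∃ μ, (μ ∈ D.MSet ∨ μ = 0) ∧ χ - μ ∈ D.Qc := by
  by_cases hχQ : χ ∈ D.Qc
  · exact ⟨0, Or.inr rfl, by simpa using hχQ⟩
  obtain ⟨ν, hνX, hνdom, hνχ⟩ := D.exists_dominant_sub_mem_Qc hχ
  have hν0 : ν ≠ 0 := by
    rintro rfl
    exact hχQ (by simpa using neg_mem hνχ)
  obtain ⟨μ, hμ, hμν⟩ := D.exists_mem_MSet_leQ ⟨hνX, hνdom⟩ hν0
  refine ⟨μ, Or.inl hμ, ?_⟩
  rw [← sub_sub_sub_cancel_left μ χ ν]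
  exact sub_mem (D.Qpos_le_Qc hμν) hνχ
end
end
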